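/- Let a, b, c be integers with c even, let M be the symmetric matrix [[-2, 0, a], [0, -2, b], [a, b, c]], and set d = 2a² + 2b² + 4c (the determinant of M). Assume d ≡ 4 (mod 8). Then there exist integers s, t such that, with P = [[1, 0, s], [0, 1, t], [0, 0, 1]], the matrix PᵀMP equals [[-2, 0, 1], [0, -2, 1], [1, 1, (d-4)/4]]. -/

import Mathlib

open Matrix

/-! The shear replacing τ by τ + sλ₁ + tλ₂ turns the off-diagonal entries a, b into a - 2s, b - 2t.
Since c is even, d ≡ 4 (mod 8) forces a and b to be odd (an even a would make d ≡ 2b² ≢ 4 (mod 8)),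
so s = (a - 1)/2 and t = (b - 1)/2 make both entries 1. -/

theorem shear_transpose_mul_gram_mul_shear {R : Type*} [CommRing R] (a b c s t : R) :
    (!![1, 0, s; 0, 1, t; 0, 0, 1] : Matrix (Fin 3) (Fin 3) R)ᵀ *
        !![-2, 0, a; 0, -2, b; a, b, c] * !![1, 0, s; 0, 1, t; 0, 0, 1] =
      !![-2, 0, a - 2 * s; 0, -2, b - 2 * t;
        a - 2 * s, b - 2 * t, c + 2 * s * a + 2 * t * b - 2 * s ^ 2 - 2 * t ^ 2] := by
  ext i j
  fin_cases i <;> fin_cases j <;> simp [Matrix.mul_apply, Fin.sum_univ_succ] <;> ring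

theorem Int.odd_of_two_sq_add_two_sq_add_four_mul_emod_eight {a b c : ℤ} (hc : Even c)
    (h : (2 * a ^ 2 + 2 * b ^ 2 + 4 * c) % 8 = 4) : Odd a := by
  by_contra ha
  obtain ⟨u, rfl⟩ := Int.not_odd_iff_even.mp ha
  obtain ⟨w, rfl⟩ := hc
  have hb : b ^ 2 % 4 = 0 ∨ b ^ 2 % 4 = 1 := by
    rcases Int.even_or_odd b with ⟨v, rfl⟩ | hb
    · left; ring_nf; omega
    · exact .inr (Int.sq_mod_four_eq_one_of_odd hb)
  have : 2 * (u + u) ^ 2 + 2 * b ^ 2 + 4 * (w + w) = 8 * (u ^ 2 + w) + 2 * b ^ 2 := by ring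
  omega

/-- Lemma 4.2, case d ≡ 4 (mod 8): the Gram matrix [[-2,0,a],[0,-2,b],[a,b,c]]
(c even) of determinant d can be put by a base change P = [[1,0,s],[0,1,t],[0,0,1]]
into the normal form with bottom-right entry (d-4)/4. -/
theorem stmt_15 (a b c : ℤ) (hc : Even c) (d : ℤ) (hd : d = 2*a^2 + 2*b^2 + 4*c)
    (hd8 : d % 8 = 4) :
    ∃ s t : ℤ,
      (!![1, 0, s; 0, 1, t; 0, 0, 1] : Matrix (Fin 3) (Fin 3) ℤ)ᵀ *
          !![-2, 0, a; 0, -2, b; a, b, c] * !![1, 0, s; 0, 1, t; 0, 0, 1] =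
        !![-2, 0, 1; 0, -2, 1; 1, 1, (d - 4) / 4] := by
  subst hd
  obtain ⟨u, rfl⟩ := Int.odd_of_two_sq_add_two_sq_add_four_mul_emod_eight hc hd8
  obtain ⟨v, rfl⟩ := Int.odd_of_two_sq_add_two_sq_add_four_mul_emod_eight hc
    (by rwa [add_comm (2 * _ ^ 2)] at hd8)
  refine ⟨u, v, ?_⟩
  have hbottom : (2 * (2 * u + 1) ^ 2 + 2 * (2 * v + 1) ^ 2 + 4 * c - 4) / 4 =
      c + 2 * u * (2 * u + 1) + 2 * v * (2 * v + 1) - 2 * u ^ 2 - 2 * v ^ 2 :=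
    Int.ediv_eq_of_eq_mul_left four_ne_zero (by ring)
  rw [shear_transpose_mul_gram_mul_shear, hbottom]
  ring_nf
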